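/- Let A be a strongly connected NFA with m states and period λ, let ε > 0, let u be a word of length n ≥ 6m²/ε, and assume L(A) contains at least one word of length n. If the positional word τ = (0:u) is ε-far from T(A), then τ contains at least εn/(6m²) pairwise disjoint occurrences of blocking factors of A. -/

import Mathlib

open scoped ENNReal

structure NFA' (Q : Type) (A : Type) where
  step : Q → A → Set Q
  init : Q
  final : Set Q

namespace NFA'

variable {Q A : Type}

inductive Run (M : NFA' Q A) : Q → List A → Q → Prop
  | nil (q : Q) : Run M q [] q
  | cons {p q r : Q} {a : A} {w : List A} :
      q ∈ M.step p a → Run M q w r → Run M p (a :: w) r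

def lang (M : NFA' Q A) : Set (List A) := {w | ∃ q ∈ M.final, M.Run M.init w q}

def Reachable (M : NFA' Q A) (s t : Q) : Prop := ∃ w, M.Run s w t

def StronglyConnected (M : NFA' Q A) : Prop := ∀ s t : Q, M.Reachable s t

def Trim (M : NFA' Q A) : Prop :=
  (∀ q, M.Reachable M.init q) ∧ (∀ q, ∃ f ∈ M.final, M.Reachable q f)

def IsPeriod (M : NFA' Q A) (l : ℕ) : Prop :=
  0 < l ∧ (∀ (q : Q) (w : List A), w ≠ [] → M.Run q w q → l ∣ w.length) ∧
    ∀ d : ℕ, (∀ (q : Q) (w : List A), w ≠ [] → M.Run q w q → d ∣ w.length) → d ∣ l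

end NFA'

def posWord {A : Type} (l : ℕ) (n : ℕ) (u : List A) : List (ZMod l × A) :=
  ((List.range u.length).zip u).map fun ka => (((n + ka.1 : ℕ) : ZMod l), ka.2)

def IsPosWord {A : Type} (l : ℕ) (τ : List (ZMod l × A)) : Prop :=
  ∃ (n : ℕ) (u : List A), τ = posWord l n u

def NFA'.posLang {Q A : Type} (M : NFA' Q A) (l : ℕ) : Set (List (ZMod l × A)) :=
  {τ | ∃ u ∈ M.lang, τ = posWord l 0 u}

def NFA'.Blocking {Q A : Type} (M : NFA' Q A) (l : ℕ) (τ : List (ZMod l × A)) : Prop :=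
  IsPosWord l τ ∧ ∀ μ : List (ZMod l × A), IsPosWord l μ → τ <:+: μ → μ ∉ M.posLang l

def NFA'.MinBlocking {Q A : Type} (M : NFA' Q A) (l : ℕ) (τ : List (ZMod l × A)) : Prop :=
  M.Blocking l τ ∧ ∀ μ : List (ZMod l × A), μ <:+: τ → μ ≠ τ → ¬ M.Blocking l μ

open Classical in
noncomputable def hamming {A : Type} (u v : List A) : ℝ≥0∞ :=
  if u.length = v.length then
    (((Finset.range u.length).filter fun k => u[k]? ≠ v[k]?).card : ℝ≥0∞)
  else ⊤

noncomputable def hammingSet {A : Type} (u : List A) (L : Set (List A)) : ℝ≥0∞ :=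
  ⨅ v ∈ L, hamming u v

inductive Scattered {α : Type} : List (List α) → List α → Prop
  | nil (τ : List α) : Scattered [] τ
  | cons (pre f : List α) (fs : List (List α)) (rest : List α) :
      Scattered fs rest → Scattered (f :: fs) (pre ++ f ++ rest)

inductive NFA'.Path {Q A : Type} (M : NFA' Q A) : Q → List Q → Q → Prop
  | nil (q : Q) : NFA'.Path M q [] q
  | cons {p q r : Q} {l : List Q} (a : A) :
      q ∈ M.step p a → NFA'.Path M q l r → NFA'.Path M p (q :: l) r

def NFA'.SimpleCycleLength {Q A : Type} (M : NFA' Q A) (n : ℕ) : Prop :=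
  ∃ (q : Q) (l : List Q), l.length = n ∧ l ≠ [] ∧ l.Nodup ∧ M.Path q l q

def NFA'.IsCycleLcm {Q A : Type} (M : NFA' Q A) (p : ℕ) : Prop :=
  (∀ n, M.SimpleCycleLength n → n ∣ p) ∧
    ∀ d : ℕ, (∀ n, M.SimpleCycleLength n → n ∣ d) → p ∣ d

def NFA'.SameSCC {Q A : Type} (M : NFA' Q A) (s t : Q) : Prop :=
  M.Reachable s t ∧ M.Reachable t s

structure Portal (Q : Type) (p : ℕ) where
  s : Q
  x : ZMod p
  t : Q
  y : ZMod p

def ValidPortal {Q A : Type} (M : NFA' Q A) {p : ℕ} (P : Portal Q p) : Prop :=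
  M.SameSCC P.s P.t

def portalLang {Q A : Type} (M : NFA' Q A) {p : ℕ} (P : Portal Q p) :
    Set (List (ZMod p × A)) :=
  {τ | ∃ w : List A, M.Run P.s w P.t ∧ P.x + (w.length : ZMod p) = P.y ∧
    τ = posWord p P.x.val w}

def PortalBlocking {Q A : Type} (M : NFA' Q A) {p : ℕ} (P : Portal Q p)
    (τ : List (ZMod p × A)) : Prop :=
  ∀ μ ∈ portalLang M P, ¬ τ <:+: μ

def IsSCCPath {Q A : Type} (M : NFA' Q A) {p : ℕ} :
    Portal Q p → List (A × Portal Q p) → Prop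
  | P0, [] => ValidPortal M P0
  | P0, (a, P) :: rest =>
      ValidPortal M P0 ∧ P.x = P0.y + 1 ∧ P.s ∈ M.step P0.t a ∧
        ¬ M.Reachable P.s P0.t ∧ IsSCCPath M P rest

def sccPathLang {Q A : Type} (M : NFA' Q A) {p : ℕ} :
    Portal Q p → List (A × Portal Q p) → Set (List (ZMod p × A))
  | P0, [] => portalLang M P0
  | P0, (a, P) :: rest =>
      {τ | ∃ τ₁ τ₂, τ₁ ∈ portalLang M P0 ∧ τ₂ ∈ sccPathLang M P rest ∧
        τ = τ₁ ++ (P0.y + 1, a) :: τ₂}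

def portalsOf {Q A : Type} {p : ℕ} (P0 : Portal Q p) (steps : List (A × Portal Q p)) :
    List (Portal Q p) :=
  P0 :: steps.map Prod.snd

def lastPortal {Q A : Type} {p : ℕ} (P0 : Portal Q p) (steps : List (A × Portal Q p)) :
    Portal Q p :=
  (steps.map Prod.snd).getLastD P0

def IsAcceptingSCCPath {Q A : Type} (M : NFA' Q A) {p : ℕ} (P0 : Portal Q p)
    (steps : List (A × Portal Q p)) : Prop :=
  IsSCCPath M P0 steps ∧ P0.s = M.init ∧ P0.x = 0 ∧
    (lastPortal P0 steps).t ∈ M.final ∧ (sccPathLang M P0 steps).Nonempty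

def BlockingSeqFor {Q A : Type} (M : NFA' Q A) {p : ℕ} (σ : List (List (ZMod p × A)))
    (P0 : Portal Q p) (steps : List (A × Portal Q p)) : Prop :=
  ∃ idx : Fin (portalsOf P0 steps).length → Fin σ.length,
    Monotone idx ∧ ∀ j, PortalBlocking M ((portalsOf P0 steps).get j) (σ.get (idx j))

def StronglyBlockingSeqFor {Q A : Type} (M : NFA' Q A) {p : ℕ}
    (σ : List (List (ZMod p × A))) (P0 : Portal Q p) (steps : List (A × Portal Q p)) : Prop :=
  ∃ idx : Fin (portalsOf P0 steps).length → Fin σ.length,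
    StrictMono idx ∧ ∀ j, PortalBlocking M ((portalsOf P0 steps).get j) (σ.get (idx j))

def BlockingSeqForNFA {Q A : Type} (M : NFA' Q A) {p : ℕ}
    (σ : List (List (ZMod p × A))) : Prop :=
  ∀ (P0 : Portal Q p) (steps : List (A × Portal Q p)),
    IsAcceptingSCCPath M P0 steps → BlockingSeqFor M σ P0 steps

def SeqLE {α : Type} (σ σ' : List (List α)) : Prop :=
  ∃ idx : Fin σ.length → Fin σ'.length,
    Monotone idx ∧ ∀ j, σ.get j <:+: σ'.get (idx j)

def MinBlockingSeq {Q A : Type} (M : NFA' Q A) {p : ℕ}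
    (σ : List (List (ZMod p × A))) : Prop :=
  BlockingSeqForNFA M σ ∧
    ∀ σ' : List (List (ZMod p × A)), BlockingSeqForNFA M σ' → SeqLE σ' σ → SeqLE σ σ'

noncomputable def leftEffect {Q A : Type} (M : NFA' Q A) {p : ℕ}
    (σ : List (List (ZMod p × A))) (P0 : Portal Q p) (steps : List (A × Portal Q p)) : ℤ :=
  ((sSup {j : ℕ | ∃ i : ℕ, j = i + 1 ∧ i ≤ steps.length ∧
    BlockingSeqFor M σ P0 (steps.take i)} : ℕ) : ℤ) - 1

section Aux
namespace NFA'

variable {Q A : Type} {M : NFA' Q A} {l : ℕ}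

theorem Run.append {p q r : Q} {w₁ w₂ : List A} (h₁ : M.Run p w₁ q) (h₂ : M.Run q w₂ r) :
    M.Run p (w₁ ++ w₂) r := by
  induction h₁ with
  | nil => simpa
  | cons hs _ ih => exact Run.cons hs (ih h₂)

theorem Run.split {p r : Q} {w₁ w₂ : List A} (h : M.Run p (w₁ ++ w₂) r) :
    ∃ q, M.Run p w₁ q ∧ M.Run q w₂ r := by
  induction w₁ generalizing p with
  | nil => exact ⟨p, Run.nil p, h⟩
  | cons a w ih =>
    cases h with
    | cons hs h' =>
      obtain ⟨q, h1, h2⟩ := ih h'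
      exact ⟨q, Run.cons hs h1, h2⟩

theorem Run.take {p r : Q} {w : List A} (h : M.Run p w r) (j : ℕ) :
    ∃ q, M.Run p (w.take j) q ∧ M.Run q (w.drop j) r := by
  have := h
  rw [← List.take_append_drop j w] at this
  exact this.split

theorem Path.appendP {p x r : Q} {s₁ s₂ : List Q} (h₁ : M.Path p s₁ x) (h₂ : M.Path x s₂ r) :
    M.Path p (s₁ ++ s₂) r := by
  induction h₁ with
  | nil => simpa
  | cons a hs _ ih => exact Path.cons a hs (ih h₂)

theorem Path.splitP {p r : Q} {s₁ s₂ : List Q} {x : Q} (h : M.Path p (s₁ ++ x :: s₂) r) :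
    M.Path p (s₁ ++ [x]) x ∧ M.Path x s₂ r := by
  induction s₁ generalizing p with
  | nil =>
    cases h with
    | cons a hs h' => exact ⟨Path.cons a hs (Path.nil x), h'⟩
  | cons y s ih =>
    cases h with
    | cons a hs h' =>
      obtain ⟨h1, h2⟩ := ih h'
      exact ⟨Path.cons a hs h1, h2⟩

theorem Run.exists_path {p q : Q} {w : List A} (h : M.Run p w q) :
    ∃ s : List Q, M.Path p s q ∧ s.length = w.length := by
  induction h with
  | nil q => exact ⟨[], Path.nil q, rfl⟩
  | cons hs _ ih =>
    obtain ⟨s, hp, hlen⟩ := ih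
    exact ⟨_ :: s, Path.cons _ hs hp, by simp [hlen]⟩

theorem Path.exists_run {p q : Q} {s : List Q} (h : M.Path p s q) :
    ∃ w : List A, M.Run p w q ∧ w.length = s.length := by
  induction h with
  | nil q => exact ⟨[], Run.nil q, rfl⟩
  | cons a hs _ ih =>
    obtain ⟨w, hr, hlen⟩ := ih
    exact ⟨a :: w, Run.cons hs hr, by simp [hlen]⟩

theorem exists_dup {α : Type} {s : List α} (h : ¬ s.Nodup) :
    ∃ (x : α) (l₁ l₂ l₃ : List α), s = l₁ ++ x :: l₂ ++ x :: l₃ := by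
  induction s with
  | nil => simp at h
  | cons a s ih =>
    by_cases ha : a ∈ s
    · obtain ⟨l₂, l₃, rfl⟩ := List.append_of_mem ha
      exact ⟨a, [], l₂, l₃, rfl⟩
    · have hs : ¬ s.Nodup := fun hn => h (List.nodup_cons.mpr ⟨ha, hn⟩)
      obtain ⟨x, l₁, l₂, l₃, rfl⟩ := ih hs
      exact ⟨x, a :: l₁, l₂, l₃, rfl⟩

theorem exists_short_run [Fintype Q] (hsc : M.StronglyConnected) (p q : Q) :
    ∃ w : List A, M.Run p w q ∧ w.length < Fintype.card Q := by
  have hex : ∃ L, ∃ w : List A, M.Run p w q ∧ w.length = L := by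
    obtain ⟨w, hw⟩ := hsc p q
    exact ⟨w.length, w, hw, rfl⟩
  classical
  set L₀ := Nat.find hex with hL₀
  obtain ⟨w, hw, hwl⟩ := Nat.find_spec hex
  by_cases hlt : L₀ < Fintype.card Q
  · exact ⟨w, hw, hwl ▸ hlt⟩
  exfalso
  obtain ⟨s, hp, hslen⟩ := hw.exists_path
  have hnd : ¬ (p :: s).Nodup := by
    intro hnd
    have := hnd.length_le_card
    simp only [List.length_cons] at this
    omega
  obtain ⟨x, l₁, l₂, l₃, hdup⟩ := exists_dup hnd
  have key : ∃ w' : List A, M.Run p w' q ∧ w'.length < L₀ := by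
    cases l₁ with
    | nil =>
      injection hdup with h1 h2
      subst h2; subst h1
      simp only [List.append_eq, List.nil_append] at hp hslen
      obtain ⟨-, h4⟩ := Path.splitP (s₁ := l₂) (s₂ := l₃) hp
      obtain ⟨w', hr', hl'⟩ := h4.exists_run
      refine ⟨w', hr', ?_⟩
      simp only [List.length_append, List.length_cons] at hslen
      omega
    | cons y l₁' =>
      injection hdup with h1 h2
      subst h2; subst h1
      simp only [List.append_eq, List.append_assoc, List.cons_append] at hp hslen
      obtain ⟨h1, h2⟩ := Path.splitP (s₁ := l₁') (s₂ := l₂ ++ x :: l₃) hp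
      obtain ⟨h3, h4⟩ := Path.splitP (s₁ := l₂) (s₂ := l₃) h2
      have houter : M.Path p ((l₁' ++ [x]) ++ l₃) q := h1.appendP h4
      obtain ⟨w', hr', hl'⟩ := houter.exists_run
      refine ⟨w', hr', ?_⟩
      simp only [List.length_append, List.length_cons, List.length_nil] at hslen hl'
      omega
  obtain ⟨w', hr', hl'⟩ := key
  exact Nat.find_min hex hl' ⟨w', hr', rfl⟩

end NFA'
end Aux
section Aux2
namespace NFA'

variable {Q A : Type} {M : NFA' Q A} {l : ℕ}

theorem closed_run_dvd (hl : M.IsPeriod l) {q : Q} {w : List A} (h : M.Run q w q) :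
    l ∣ w.length := by
  rcases eq_or_ne w [] with rfl | hw
  · simp
  · exact hl.2.1 q w hw h

theorem run_modEq (hsc : M.StronglyConnected) (hl : M.IsPeriod l) {p q : Q} {w₁ w₂ : List A}
    (h₁ : M.Run p w₁ q) (h₂ : M.Run p w₂ q) : w₁.length ≡ w₂.length [MOD l] := by
  obtain ⟨ρ, hρ⟩ := hsc q p
  have d1 : l ∣ (w₁ ++ ρ).length := closed_run_dvd hl (h₁.append hρ)
  have d2 : l ∣ (w₂ ++ ρ).length := closed_run_dvd hl (h₂.append hρ)
  simp only [List.length_append] at d1 d2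
  have h3 : w₁.length + ρ.length ≡ w₂.length + ρ.length [MOD l] :=
    ((Nat.modEq_zero_iff_dvd).mpr d1).trans ((Nat.modEq_zero_iff_dvd).mpr d2).symm
  exact Nat.ModEq.add_right_cancel' _ h3

open Classical in
noncomputable def sclSet (M : NFA' Q A) [Fintype Q] : Finset ℕ :=
  (Finset.Icc 1 (Fintype.card Q)).filter (fun c => M.SimpleCycleLength c)

theorem mem_sclSet [Fintype Q] {c : ℕ} (h : M.SimpleCycleLength c) : c ∈ M.sclSet := by
  classical
  obtain ⟨q, s, hlen, hne, hnd, hp⟩ := h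
  refine Finset.mem_filter.mpr ⟨Finset.mem_Icc.mpr ⟨?_, ?_⟩, ⟨q, s, hlen, hne, hnd, hp⟩⟩
  · rw [← hlen]; exact List.length_pos_iff.mpr hne
  · rw [← hlen]; exact hnd.length_le_card

theorem sclSet_subset [Fintype Q] {c : ℕ} (h : c ∈ M.sclSet) :
    M.SimpleCycleLength c ∧ 1 ≤ c ∧ c ≤ Fintype.card Q := by
  classical
  obtain ⟨h1, h2⟩ := Finset.mem_filter.mp h
  exact ⟨h2, (Finset.mem_Icc.mp h1).1, (Finset.mem_Icc.mp h1).2⟩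

theorem closed_path_decomp [Fintype Q] :
    ∀ (L : ℕ) (s : List Q) (q : Q), s.length = L → s ≠ [] → M.Path q s q →
    ∃ μ : Multiset ℕ, (∀ c ∈ μ, c ∈ M.sclSet) ∧ μ.sum = s.length := by
  intro L
  induction L using Nat.strong_induction_on with
  | _ L ih =>
    intro s q hL hne hp
    by_cases hnd : s.Nodup
    · refine ⟨{s.length}, ?_, by simp⟩
      intro c hc
      rw [Multiset.mem_singleton] at hc
      subst hc
      exact mem_sclSet ⟨q, s, rfl, hne, hnd, hp⟩
    · obtain ⟨x, l₁, l₂, l₃, rfl⟩ := exists_dup hnd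
      have hp' : M.Path q (l₁ ++ x :: (l₂ ++ x :: l₃)) q := by
        simpa [List.append_assoc] using hp
      obtain ⟨ha, hb⟩ := Path.splitP (s₁ := l₁) (s₂ := l₂ ++ x :: l₃) hp'
      obtain ⟨hc, hd⟩ := Path.splitP (s₁ := l₂) (s₂ := l₃) hb
      have hmid : M.Path x (l₂ ++ [x]) x := hc
      have houter : M.Path q ((l₁ ++ [x]) ++ l₃) q := ha.appendP hd
      have hlen1 : (l₂ ++ [x]).length < L := by
        simp only [List.length_append, List.length_cons, List.length_nil] at hL ⊢
        omega
      have hlen2 : ((l₁ ++ [x]) ++ l₃).length < L := by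
        simp only [List.length_append, List.length_cons, List.length_nil] at hL ⊢
        omega
      obtain ⟨μ₁, hμ₁, hs₁⟩ := ih _ hlen1 (l₂ ++ [x]) x rfl (by simp) hmid
      obtain ⟨μ₂, hμ₂, hs₂⟩ := ih _ hlen2 ((l₁ ++ [x]) ++ l₃) q rfl (by simp) houter
      refine ⟨μ₁ + μ₂, ?_, ?_⟩
      · intro c hc
        rcases Multiset.mem_add.mp hc with h | h
        exacts [hμ₁ c h, hμ₂ c h]
      · rw [Multiset.sum_add, hs₁, hs₂]
        simp only [List.length_append, List.length_cons, List.length_nil]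
        omega

theorem scl_gcd [Fintype Q] (hsc : M.StronglyConnected) (hl : M.IsPeriod l) :
    M.sclSet.gcd id = l := by
  apply Nat.dvd_antisymm
  · apply hl.2.2
    intro q w hw hr
    obtain ⟨s, hp, hlen⟩ := hr.exists_path
    have hsne : s ≠ [] := by
      intro h
      rw [h] at hlen
      exact hw (List.length_eq_zero_iff.mp hlen.symm)
    obtain ⟨μ, hμ, hsum⟩ := closed_path_decomp s.length s q rfl hsne hp
    rw [← hlen, ← hsum]
    exact Multiset.dvd_sum fun c hc => Finset.gcd_dvd (hμ c hc)
  · refine Finset.dvd_gcd fun c hc => ?_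
    obtain ⟨⟨q, s, hlen, hne, hnd, hp⟩, -, -⟩ := sclSet_subset hc
    obtain ⟨w, hr, hwl⟩ := hp.exists_run
    have hwne : w ≠ [] := by
      intro h
      rw [h] at hwl
      exact hne (List.length_eq_zero_iff.mp hwl.symm ▸ (by
        cases s with
        | nil => rfl
        | cons a s => simp at hwl))
    have := hl.2.1 q w hwne hr
    rw [hwl, hlen] at this
    exact this

theorem sclSet_nonempty [Fintype Q] (hl : M.IsPeriod l) : M.sclSet.Nonempty := by
  by_contra h
  rw [Finset.not_nonempty_iff_eq_empty] at h
  have hnc : ∀ (q : Q) (w : List A), w ≠ [] → M.Run q w q → (l + 1) ∣ w.length := by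
    intro q w hw hr
    obtain ⟨s, hp, hlen⟩ := hr.exists_path
    have hsne : s ≠ [] := by
      intro hh
      rw [hh] at hlen
      exact hw (List.length_eq_zero_iff.mp hlen.symm)
    obtain ⟨μ, hμ, hsum⟩ := closed_path_decomp s.length s q rfl hsne hp
    have hμ0 : μ = 0 := Multiset.eq_zero_of_forall_notMem fun c hc => by
      have := hμ c hc
      rw [h] at this
      exact absurd this (Finset.notMem_empty c)
    rw [hμ0] at hsum
    simp only [Multiset.sum_zero] at hsum
    exact absurd (List.length_eq_zero_iff.mp hsum.symm) hsne
  have hdvd := hl.2.2 (l + 1) hnc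
  have := Nat.le_of_dvd hl.1 hdvd
  omega

end NFA'
end Aux2
section Aux3
namespace NFA'

variable {Q A : Type} {M : NFA' Q A} {l : ℕ}

def Rep (M : NFA' Q A) [Fintype Q] (N : ℕ) : Prop :=
  ∃ μ : Multiset ℕ, (∀ c ∈ μ, c ∈ M.sclSet) ∧ μ.sum = N

theorem Rep.add [Fintype Q] {N₁ N₂ : ℕ} (h₁ : M.Rep N₁) (h₂ : M.Rep N₂) : M.Rep (N₁ + N₂) := by
  obtain ⟨μ₁, hμ₁, hs₁⟩ := h₁
  obtain ⟨μ₂, hμ₂, hs₂⟩ := h₂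
  refine ⟨μ₁ + μ₂, ?_, by rw [Multiset.sum_add, hs₁, hs₂]⟩
  intro c hc
  rcases Multiset.mem_add.mp hc with h | h
  exacts [hμ₁ c h, hμ₂ c h]

theorem rep_zero [Fintype Q] : M.Rep 0 := ⟨0, by simp, by simp⟩

theorem rep_replicate [Fintype Q] {a : ℕ} (ha : a ∈ M.sclSet) (t : ℕ) : M.Rep (t * a) := by
  refine ⟨Multiset.replicate t a, ?_, by simp [Multiset.sum_replicate]⟩
  intro c hc
  rw [Multiset.eq_of_mem_replicate hc]
  exact ha

theorem frob [Fintype Q] (hsc : M.StronglyConnected) (hl : M.IsPeriod l) {N : ℕ}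
    (hdvd : l ∣ N)
    (hN : Fintype.card Q * Fintype.card Q ≤ N + Fintype.card Q) : M.Rep N := by
  classical
  set m := Fintype.card Q with hm
  set C := M.sclSet with hC
  have hCne : C.Nonempty := sclSet_nonempty hl
  set a := C.min' hCne with ha
  obtain ⟨-, ha1, ham⟩ := sclSet_subset (C.min'_mem hCne)
  haveI : NeZero a := ⟨by omega⟩
  have hcm : ∀ c ∈ C, c ≤ m := fun c hc => (sclSet_subset hc).2.2
  -- iterated reachable sets in ZMod a
  let f : ℕ → Finset (ZMod a) := fun j =>
    Nat.rec {0} (fun _ s => s ∪ C.biUnion fun c => s.image (· + (c : ZMod a))) j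
  have hf0 : f 0 = {0} := rfl
  have hfs : ∀ j, f (j + 1) = f j ∪ C.biUnion fun c => (f j).image (· + (c : ZMod a)) :=
    fun j => rfl
  have hfsub : ∀ j, f j ⊆ f (j + 1) := fun j => by rw [hfs j]; exact Finset.subset_union_left
  -- stabilization
  have hstab : ∃ j, j < a ∧ f (j + 1) ⊆ f j := by
    by_contra hcon
    push_neg at hcon
    have grow : ∀ j, j < a → (f j).card < (f (j + 1)).card := by
      intro j hj
      exact Finset.card_lt_card (Finset.ssubset_iff_subset_ne.mpr ⟨hfsub j,
        fun he => (hcon j hj) (he ▸ Finset.Subset.refl _)⟩)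
    have hgrow2 : ∀ j, j ≤ a → j + 1 ≤ (f j).card := by
      intro j
      induction j with
      | zero => intro _; simp [hf0]
      | succ j ih =>
        intro hj
        have h1 := ih (by omega)
        have h2 := grow j (by omega)
        omega
    have h1 := hgrow2 a le_rfl
    have h2 : (f a).card ≤ Fintype.card (ZMod a) := Finset.card_le_univ _
    rw [ZMod.card] at h2
    omega
  obtain ⟨j₀, hj₀a, hj₀⟩ := hstab
  set S := f j₀ with hS
  have hzeroS : (0 : ZMod a) ∈ S := by
    have : ∀ j, (0 : ZMod a) ∈ f j := by
      intro j
      induction j with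
      | zero => simp [hf0]
      | succ j ih => exact hfsub j ih
    exact this j₀
  have hSstep : ∀ ρ ∈ S, ∀ c ∈ C, ρ + (c : ZMod a) ∈ S := by
    intro ρ hρ c hc
    apply hj₀
    rw [hfs j₀]
    exact Finset.mem_union_right _ (Finset.mem_biUnion.mpr ⟨c, hc,
      Finset.mem_image.mpr ⟨ρ, hρ, rfl⟩⟩)
  have hSadd : ∀ i, ∀ ρ ∈ f i, ∀ σ ∈ S, σ + ρ ∈ S := by
    intro i
    induction i with
    | zero =>
      intro ρ hρ σ hσ
      rw [hf0, Finset.mem_singleton] at hρ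
      simpa [hρ]
    | succ i ih =>
      intro ρ hρ σ hσ
      rw [hfs i] at hρ
      rcases Finset.mem_union.mp hρ with h | h
      · exact ih ρ h σ hσ
      · obtain ⟨c, hc, himg⟩ := Finset.mem_biUnion.mp h
        obtain ⟨ρ', hρ', rfl⟩ := Finset.mem_image.mp himg
        have := hSstep (σ + ρ') (ih ρ' hρ' σ hσ) c hc
        rwa [add_assoc] at this
  have hSnsmul : ∀ (t : ℕ), ∀ ρ ∈ S, t • ρ ∈ S := by
    intro t
    induction t with
    | zero => intro ρ _; simpa using hzeroS
    | succ t ih =>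
      intro ρ hρ
      have : (t + 1) • ρ = t • ρ + ρ := by rw [add_nsmul, one_nsmul]
      rw [this]
      exact hSadd j₀ ρ hρ _ (ih ρ hρ)
  have hSneg : ∀ ρ ∈ S, -ρ ∈ S := by
    intro ρ hρ
    have hz : ρ + (a - 1) • ρ = 0 := by
      have : ρ + (a - 1) • ρ = a • ρ := by
        nth_rewrite 1 [← one_nsmul ρ]
        rw [← add_nsmul]
        congr 1
        omega
      rw [this, nsmul_eq_mul, ZMod.natCast_self, zero_mul]
    rw [neg_eq_of_add_eq_zero_right hz]
    exact hSnsmul _ ρ hρ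
  -- the subgroup closure of the casts of C is inside S
  have hclosure : ∀ ρ : ZMod a, ρ ∈ AddSubgroup.closure ((fun c : ℕ => (c : ZMod a)) '' ↑C) →
      ρ ∈ S := by
    intro ρ hρ
    induction hρ using AddSubgroup.closure_induction with
    | mem x hx =>
      obtain ⟨c, hc, rfl⟩ := hx
      have := hSstep 0 hzeroS c hc
      simpa using this
    | zero => exact hzeroS
    | add x y _ _ hx hy => exact hSadd j₀ y (hy) x (hx)
    | neg x _ hx => exact hSneg x hx
  -- gcd is in the closure
  have hgcdmem : ∀ s : Finset ℕ, ((s.gcd id : ℕ) : ZMod a) ∈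
      AddSubgroup.closure ((fun c : ℕ => (c : ZMod a)) '' ↑s) := by
    intro s
    induction s using Finset.induction_on with
    | empty => simp
    | insert b s hb ih =>
      rw [Finset.gcd_insert]
      show ((Nat.gcd b (s.gcd id) : ℕ) : ZMod a) ∈ _
      have hbmem : ((b : ℕ) : ZMod a) ∈
          AddSubgroup.closure ((fun c : ℕ => (c : ZMod a)) '' ↑(insert b s)) :=
        AddSubgroup.subset_closure ⟨b, by simp, rfl⟩
      have hgmem : ((s.gcd id : ℕ) : ZMod a) ∈
          AddSubgroup.closure ((fun c : ℕ => (c : ZMod a)) '' ↑(insert b s)) := by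
        refine AddSubgroup.closure_mono ?_ ih
        exact Set.image_mono (by simp [Finset.subset_insert])
      have hbez := Nat.gcd_eq_gcd_ab b (s.gcd id)
      have hcast : ((Nat.gcd b (s.gcd id) : ℕ) : ZMod a) =
          (Nat.gcdA b (s.gcd id)) • ((b : ℕ) : ZMod a) +
          (Nat.gcdB b (s.gcd id)) • ((s.gcd id : ℕ) : ZMod a) := by
        have := congrArg (fun z : ℤ => ((z : ℤ) : ZMod a)) hbez
        push_cast at this
        rw [this]
        simp [zsmul_eq_mul]
        ring
      rw [hcast]
      exact AddSubgroup.add_mem _ (AddSubgroup.zsmul_mem _ hbmem _)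
        (AddSubgroup.zsmul_mem _ hgmem _)
  -- N's residue lies in S
  have hlgcd : C.gcd id = l := scl_gcd hsc hl
  obtain ⟨t, rfl⟩ := hdvd
  have hNmem : ((l * t : ℕ) : ZMod a) ∈ S := by
    apply hclosure
    have h1 := hgcdmem C
    rw [hlgcd] at h1
    have : ((l * t : ℕ) : ZMod a) = t • ((l : ℕ) : ZMod a) := by
      push_cast
      rw [nsmul_eq_mul]
      ring
    rw [this]
    exact AddSubgroup.nsmul_mem _ h1 t
  -- witness
  have hwit : ∀ j, ∀ ρ ∈ f j, ∃ x : ℕ, M.Rep x ∧ x ≤ j * m ∧ (x : ZMod a) = ρ := by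
    intro j
    induction j with
    | zero =>
      intro ρ hρ
      rw [hf0, Finset.mem_singleton] at hρ
      exact ⟨0, rep_zero, by omega, by simp [hρ]⟩
    | succ j ih =>
      intro ρ hρ
      rw [hfs j] at hρ
      rcases Finset.mem_union.mp hρ with h | h
      · obtain ⟨x, hx1, hx2, hx3⟩ := ih ρ h
        exact ⟨x, hx1, by nlinarith, hx3⟩
      · obtain ⟨c, hc, himg⟩ := Finset.mem_biUnion.mp h
        obtain ⟨ρ', hρ', rfl⟩ := Finset.mem_image.mp himg
        obtain ⟨x, hx1, hx2, hx3⟩ := ih ρ' hρ'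
        refine ⟨x + c, hx1.add ⟨{c}, by simpa using hc, by simp⟩, ?_, by push_cast [hx3]; ring⟩
        have := hcm c hc
        nlinarith
  obtain ⟨x, hxrep, hxle, hxcast⟩ := hwit j₀ _ hNmem
  have hxleN : x ≤ l * t := by
    have h1 : x ≤ (a - 1) * m := le_trans hxle (Nat.mul_le_mul_right m (by omega))
    have h2 : (a - 1) * m ≤ (m - 1) * m := Nat.mul_le_mul_right m (by omega)
    have h3 : (m - 1) * m = m * m - m := by
      cases m with
      | zero => simp
      | succ k => simp [Nat.succ_sub_one, Nat.mul_comm]; ring_nf; omega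
    omega
  have hmodeq : x ≡ l * t [MOD a] := (ZMod.natCast_eq_natCast_iff _ _ _).mp (by rw [hxcast])
  have hdvd2 : a ∣ l * t - x := (Nat.modEq_iff_dvd' hxleN).mp hmodeq
  obtain ⟨t', ht'⟩ := hdvd2
  have : l * t = x + t' * a := by rw [Nat.mul_comm t' a]; omega
  rw [this]
  exact hxrep.add (rep_replicate (C.min'_mem hCne) t')

end NFA'
end Aux3
section Aux4
namespace NFA'

variable {Q A : Type} {M : NFA' Q A} {l : ℕ}

theorem run_pow {x : Q} {w : List A} (h : M.Run x w x) (t : ℕ) :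
    ∃ v, M.Run x v x ∧ v.length = t * w.length := by
  induction t with
  | zero => exact ⟨[], Run.nil x, by simp⟩
  | succ t ih =>
    obtain ⟨v, hv, hlen⟩ := ih
    refine ⟨v ++ w, hv.append h, ?_⟩
    simp only [List.length_append, hlen]
    ring

theorem zip_zero_sum : ∀ (cl : List ℕ) (n : ℕ),
    (List.zipWith (· * ·) (List.replicate n 0) cl).sum = 0 := by
  intro cl
  induction cl with
  | nil => intro n; simp
  | cons c cl ih =>
    intro n
    cases n with
    | zero => simp
    | succ n => simp [List.replicate_succ, ih n]

theorem zipWith_map_mul : ∀ (cl : List ℕ) (f : ℕ → ℕ),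
    List.zipWith (· * ·) (cl.map f) cl = cl.map (fun c => f c * c) := by
  intro cl f
  induction cl with
  | nil => simp
  | cons c cl ih => simp [ih]

theorem sum_count_mul (C : Finset ℕ) :
    ∀ (μ : Multiset ℕ), (∀ c ∈ μ, c ∈ C) → ∑ c ∈ C, μ.count c * c = μ.sum := by
  intro μ
  induction μ using Multiset.induction_on with
  | empty => simp
  | cons a μ ih =>
    intro h
    have ha : a ∈ C := h a (Multiset.mem_cons_self a μ)
    have hsub : ∀ c ∈ μ, c ∈ C := fun c hc => h c (Multiset.mem_cons_of_mem hc)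
    calc ∑ c ∈ C, (a ::ₘ μ).count c * c
        = ∑ c ∈ C, (μ.count c * c + if c = a then c else 0) := by
          refine Finset.sum_congr rfl fun c _ => ?_
          rw [Multiset.count_cons]
          by_cases hca : c = a <;> simp [hca] <;> ring
      _ = μ.sum + a := by
          rw [Finset.sum_add_distrib, ih hsub, Finset.sum_ite_eq' C a (fun c => c)]
          simp [ha]
      _ = (a ::ₘ μ).sum := by rw [Multiset.sum_cons]; ring

theorem tour [Fintype Q] (hsc : M.StronglyConnected) :
    ∀ (cl : List ℕ), (∀ c ∈ cl, M.SimpleCycleLength c) → ∀ p q : Q,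
    ∃ D : ℕ, D ≤ (cl.length + 1) * Fintype.card Q ∧
      ∀ ns : List ℕ, ns.length = cl.length →
        ∃ w, M.Run p w q ∧ w.length = D + (List.zipWith (· * ·) ns cl).sum := by
  intro cl
  induction cl with
  | nil =>
    intro _ p q
    obtain ⟨w, hw, hlen⟩ := exists_short_run hsc p q
    refine ⟨w.length, by simpa using hlen.le, ?_⟩
    intro ns hns
    simp only [List.length_nil] at hns
    rw [List.length_eq_zero_iff] at hns
    subst hns
    exact ⟨w, hw, by simp⟩
  | cons c cl ih =>
    intro hmem p q
    obtain ⟨x, s, hslen, hsne, hsnd, hp⟩ := hmem c List.mem_cons_self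
    obtain ⟨wc, hwc, hwcl⟩ := hp.exists_run
    obtain ⟨w₀, hw₀, hw₀l⟩ := exists_short_run hsc p x
    obtain ⟨D', hD', hrest⟩ := ih (fun c' hc' => hmem c' (List.mem_cons_of_mem c hc')) x q
    refine ⟨w₀.length + D', ?_, ?_⟩
    · rw [List.length_cons, Nat.succ_mul]
      omega
    · intro ns hns
      cases ns with
      | nil => simp at hns
      | cons n₁ ns' =>
        obtain ⟨wl, hwl, hwll⟩ := run_pow hwc n₁
        obtain ⟨wr, hwr, hwrl⟩ := hrest ns' (by simpa using hns)
        refine ⟨w₀ ++ (wl ++ wr), hw₀.append (hwl.append hwr), ?_⟩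
        simp only [List.length_append, hwll, hwrl, hwcl, hslen, List.zipWith_cons_cons,
          List.sum_cons]
        ring

theorem pump [Fintype Q] (hsc : M.StronglyConnected) (hl : M.IsPeriod l)
    {p q : Q} {w : List A} (hw : M.Run p w q) {L : ℕ}
    (hmod : w.length ≡ L [MOD l]) (hL : 2 * (Fintype.card Q * Fintype.card Q) ≤ L) :
    ∃ v, M.Run p v q ∧ v.length = L := by
  classical
  obtain ⟨D, hD, hbuild⟩ := tour hsc M.sclSet.toList
    (fun c hc => (sclSet_subset (Finset.mem_toList.mp hc)).1) p q
  have hClen : M.sclSet.toList.length ≤ Fintype.card Q := by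
    rw [Finset.length_toList]
    calc M.sclSet.card ≤ (Finset.Icc 1 (Fintype.card Q)).card := Finset.card_filter_le _ _
      _ = Fintype.card Q := by rw [Nat.card_Icc]; omega
  have hDle : D ≤ (Fintype.card Q + 1) * Fintype.card Q :=
    le_trans hD (Nat.mul_le_mul_right _ (by omega))
  obtain ⟨w₀, hw₀, hw₀l⟩ := hbuild (List.replicate M.sclSet.toList.length 0) (by simp)
  have hw₀len : w₀.length = D := by simp [hw₀l, zip_zero_sum]
  have hmodD : D ≡ L [MOD l] := by
    have h1 : w₀.length ≡ w.length [MOD l] := run_modEq hsc hl hw₀ hw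
    rw [hw₀len] at h1
    exact h1.trans hmod
  have hmm : (Fintype.card Q + 1) * Fintype.card Q =
      Fintype.card Q * Fintype.card Q + Fintype.card Q := by ring
  have hm0 : 0 < Fintype.card Q := Fintype.card_pos_iff.mpr ⟨p⟩
  have hmle : Fintype.card Q ≤ Fintype.card Q * Fintype.card Q :=
    Nat.le_mul_of_pos_left _ hm0
  have hDL : D ≤ L := by omega
  have hdvdLD : l ∣ L - D := (Nat.modEq_iff_dvd' hDL).mp hmodD
  have hrep : M.Rep (L - D) := frob hsc hl hdvdLD (by omega)
  obtain ⟨μ, hμ, hμsum⟩ := hrep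
  obtain ⟨v, hv, hvl⟩ := hbuild (M.sclSet.toList.map μ.count) (by simp)
  refine ⟨v, hv, ?_⟩
  rw [hvl, zipWith_map_mul]
  have hsum2 : (M.sclSet.toList.map fun c => μ.count c * c).sum = ∑ c ∈ M.sclSet, μ.count c * c :=
    Finset.sum_map_toList M.sclSet _
  rw [hsum2, sum_count_mul M.sclSet μ hμ, hμsum]
  omega

end NFA'
end Aux4
section Aux5

theorem posWord_length {A : Type} (l n : ℕ) (u : List A) :
    (posWord l n u).length = u.length := by
  simp [posWord]

theorem posWord_get? {A : Type} (l n : ℕ) (u : List A) (k : ℕ) :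
    (posWord l n u)[k]? = u[k]?.map fun a => (((n + k : ℕ) : ZMod l), a) := by
  simp only [posWord, List.getElem?_map, List.zip_eq_zipWith, List.getElem?_zipWith, List.getElem?_range]
  by_cases hk : k < u.length <;> simp [hk]

theorem posWord_nil {A : Type} (l n : ℕ) : posWord l n ([] : List A) = [] := by simp [posWord]

theorem posWord_cons {A : Type} (l n : ℕ) (a : A) (u : List A) :
    posWord l n (a :: u) = ((n : ZMod l), a) :: posWord l (n + 1) u := by
  apply List.ext_getElem?
  intro k
  cases k with
  | zero => simp [posWord_get?]
  | succ k =>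
    simp only [posWord_get?, List.getElem?_cons_succ]
    have : n + (k + 1) = (n + 1) + k := by omega
    rw [this]

theorem posWord_append {A : Type} (l n : ℕ) (u v : List A) :
    posWord l n (u ++ v) = posWord l n u ++ posWord l (n + u.length) v := by
  induction u generalizing n with
  | nil => simp [posWord_nil]
  | cons a u ih =>
    simp only [List.cons_append, posWord_cons, ih (n + 1), List.length_cons]
    have : n + 1 + u.length = n + (u.length + 1) := by omega
    rw [this]

theorem posWord_snd {A : Type} (l n : ℕ) (u : List A) :
    (posWord l n u).map Prod.snd = u := by
  induction u generalizing n with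
  | nil => simp [posWord_nil]
  | cons a u ih => simp [posWord_cons, ih]

theorem posWord_congr {A : Type} {l n n' : ℕ} (h : (n : ZMod l) = (n' : ZMod l))
    (u : List A) : posWord l n u = posWord l n' u := by
  induction u generalizing n n' with
  | nil => simp [posWord_nil]
  | cons a u ih =>
    have h' : ((n + 1 : ℕ) : ZMod l) = ((n' + 1 : ℕ) : ZMod l) := by push_cast; rw [h]
    rw [posWord_cons, posWord_cons, h, ih h']

theorem posWord_infix {A : Type} {l i : ℕ} {w w' : List A}
    (h : posWord l i w <:+: posWord l 0 w') :
    ∃ α β : List A, w' = α ++ w ++ β ∧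
      (w ≠ [] → ((α.length : ZMod l) = (i : ZMod l))) := by
  obtain ⟨s, t, heq⟩ := h
  have hlen : w'.length = s.length + w.length + t.length := by
    have := congrArg List.length heq
    simp only [List.length_append, posWord_length] at this
    omega
  set α := w'.take s.length with hα
  set mid := (w'.drop s.length).take w.length with hmid
  set β := (w'.drop s.length).drop w.length with hβ
  have hw' : w' = α ++ mid ++ β := by
    rw [hα, hmid, hβ, List.append_assoc, List.take_append_drop, List.take_append_drop]
  have hαlen : α.length = s.length := by
    rw [hα, List.length_take]
    omega
  have hmidlen : mid.length = w.length := by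
    rw [hmid, List.length_take, List.length_drop]
    omega
  have hsplit : posWord l 0 w' = posWord l 0 α ++ posWord l α.length mid ++
      posWord l (α.length + mid.length) β := by
    nth_rewrite 1 [hw']
    rw [posWord_append, posWord_append, List.length_append]
    simp
  rw [hsplit] at heq
  have h1 : s ++ (posWord l i w ++ t) = posWord l 0 α ++ (posWord l α.length mid ++
      posWord l (α.length + mid.length) β) := by
    simpa [List.append_assoc] using heq
  have hlen1 : s.length = (posWord l 0 α).length := by rw [posWord_length, hαlen]
  obtain ⟨-, h2⟩ := List.append_inj h1 hlen1
  have hlen2 : (posWord l i w).length = (posWord l α.length mid).length := by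
    rw [posWord_length, posWord_length, hmidlen]
  obtain ⟨h3, -⟩ := List.append_inj h2 hlen2
  have hwmid : w = mid := by
    have := congrArg (List.map Prod.snd) h3
    rwa [posWord_snd, posWord_snd] at this
  refine ⟨α, β, by rw [hw', hwmid], ?_⟩
  intro hwne
  rw [← hwmid] at h3
  cases w with
  | nil => exact absurd rfl hwne
  | cons a w'' =>
    rw [posWord_cons, posWord_cons] at h3
    have := (List.cons.injEq _ _ _ _).mp h3
    have hh := this.1
    rw [Prod.mk.injEq] at hh
    exact hh.1.symm

open Classical in
noncomputable def dC {A : Type} : List A → List A → ℕ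
  | [], _ => 0
  | _ :: _, [] => 0
  | a :: u, b :: v => (if a = b then 0 else 1) + dC u v

theorem dC_self {A : Type} (u : List A) : dC u u = 0 := by
  induction u with
  | nil => rfl
  | cons a u ih => simp [dC, ih]

theorem dC_le_length {A : Type} : ∀ (u v : List A), dC u v ≤ u.length := by
  intro u
  induction u with
  | nil => intro v; simp [dC]
  | cons a u ih =>
    intro v
    cases v with
    | nil => simp [dC]
    | cons b v =>
      have := ih v
      simp only [dC, List.length_cons]
      by_cases hab : a = b <;> simp [hab] <;> omega

theorem dC_append {A : Type} : ∀ (x x' y y' : List A), x.length = x'.length →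
    dC (x ++ y) (x' ++ y') = dC x x' + dC y y' := by
  intro x
  induction x with
  | nil =>
    intro x' y y' hlen
    rw [List.length_nil] at hlen
    rw [(List.length_eq_zero_iff.mp hlen.symm)]
    simp [dC]
  | cons a x ih =>
    intro x' y y' hlen
    cases x' with
    | nil => simp at hlen
    | cons b x' =>
      simp only [List.cons_append, dC, List.append_eq]
      rw [ih x' y y' (by simpa using hlen)]
      omega

open Classical in
theorem card_filter_le_dC {A : Type} : ∀ (u v : List A),
    ((Finset.range u.length).filter fun k => u[k]? ≠ v[k]?).card ≤ dC u v + (u.length - v.length) := by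
  intro u
  induction u with
  | nil => intro v; simp
  | cons a u ih =>
    intro v
    cases v with
    | nil =>
      simp only [dC, List.length_nil, Nat.sub_zero]
      calc ((Finset.range (a :: u).length).filter fun k => (a :: u)[k]? ≠ ([] : List A)[k]?).card
          ≤ (Finset.range (a :: u).length).card := Finset.card_filter_le _ _
        _ = (a :: u).length := Finset.card_range _
        _ ≤ 0 + (a :: u).length := by omega
    | cons b v =>
      have key : ((Finset.range (u.length + 1)).filter
          fun k => (a :: u)[k]? ≠ (b :: v)[k]?).card =
          ((Finset.range u.length).filter fun k => u[k]? ≠ v[k]?).card +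
          (if (a : A) = b then 0 else 1) := by
        rw [Finset.card_filter, Finset.sum_range_succ', Finset.card_filter]
        simp only [List.getElem?_cons_succ, List.getElem?_cons_zero]
        congr 1
        by_cases hab : a = b <;> simp [hab]
      simp only [List.length_cons, key, dC]
      have := ih v
      by_cases hab : a = b <;> simp only [hab, if_true, if_false] <;> omega

end Aux5
section Aux6

open Classical in
theorem hamming_posWord_le {A : Type} (l : ℕ) (u v : List A) (hlen : u.length = v.length) :
    hamming (posWord l 0 u) (posWord l 0 v) ≤ (dC u v : ℝ≥0∞) := by
  have hplen : (posWord l 0 u).length = (posWord l 0 v).length := by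
    rw [posWord_length, posWord_length, hlen]
  rw [hamming, if_pos hplen]
  have hsub : ((Finset.range (posWord l 0 u).length).filter
      fun k => (posWord l 0 u)[k]? ≠ (posWord l 0 v)[k]?).card ≤
      ((Finset.range u.length).filter fun k => u[k]? ≠ v[k]?).card := by
    apply Finset.card_le_card
    rw [posWord_length]
    intro k hk
    rw [Finset.mem_filter] at hk ⊢
    refine ⟨hk.1, fun hne => hk.2 ?_⟩
    rw [posWord_get?, posWord_get?, hne]
  have hdc : ((Finset.range u.length).filter fun k => u[k]? ≠ v[k]?).card ≤ dC u v := by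
    have := card_filter_le_dC u v
    omega
  norm_cast
  convert le_trans hsub hdc using 2

open Classical in
theorem hamming_le_len {P : Type} (u v : List P) (h : u.length = v.length) :
    hamming u v ≤ (u.length : ℝ≥0∞) := by
  rw [hamming, if_pos h]
  have : ((Finset.range u.length).filter fun k => u[k]? ≠ v[k]?).card ≤ u.length := by
    calc _ ≤ (Finset.range u.length).card := Finset.card_filter_le _ _
      _ = u.length := Finset.card_range _
  exact_mod_cast this

theorem hammingSet_le {P : Type} (u : List P) {L : Set (List P)} {v : List P} (hv : v ∈ L) :
    hammingSet u L ≤ hamming u v := by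
  unfold hammingSet
  exact iInf₂_le v hv

namespace NFA'

variable {Q A : Type} {M : NFA' Q A} {l : ℕ}

theorem mem_posLang {v : List A} (hv : v ∈ M.lang) : posWord l 0 v ∈ M.posLang l :=
  ⟨v, hv, rfl⟩

theorem piece_wit {i : ℕ} {w : List A} (hnb : ¬ M.Blocking l (posWord l i w))
    (hwne : w ≠ []) :
    ∃ (s t : Q) (α : List A), M.Run M.init α s ∧ ((α.length : ZMod l) = (i : ZMod l)) ∧
      M.Run s w t := by
  unfold Blocking at hnb
  push_neg at hnb
  obtain ⟨μ, hμpos, hinf, hμlang⟩ := hnb ⟨i, w, rfl⟩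
  obtain ⟨w', hw'lang, rfl⟩ := hμlang
  obtain ⟨α, β, rfl, hres⟩ := posWord_infix hinf
  obtain ⟨f, hf, hrun⟩ := hw'lang
  rw [List.append_assoc] at hrun
  obtain ⟨s, hs1, hs2⟩ := hrun.split
  obtain ⟨t, ht1, ht2⟩ := hs2.split
  exact ⟨s, t, α, hs1, hres hwne, ht1⟩

end NFA'
end Aux6
section Aux7

def fac {A : Type} (u : List A) (x y : ℕ) : List A := (u.drop x).take (y - x)

theorem fac_length {A : Type} (u : List A) {x y : ℕ} (hxy : x ≤ y) (hy : y ≤ u.length) :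
    (fac u x y).length = y - x := by
  simp only [fac, List.length_take, List.length_drop]
  omega

theorem fac_append {A : Type} (u : List A) {x y z : ℕ} (hxy : x ≤ y) (hyz : y ≤ z) :
    fac u x y ++ fac u y z = fac u x z := by
  have h1 : (u.drop x).drop (y - x) = u.drop y := by
    rw [List.drop_drop]
    congr 1
    omega
  have h2 : z - x = (y - x) + (z - y) := by omega
  rw [fac, fac, fac, h2, List.take_add, h1]

theorem drop_eq_fac_append {A : Type} (u : List A) {x y : ℕ} (hxy : x ≤ y) :
    u.drop x = fac u x y ++ u.drop y := by
  have h1 : (u.drop x).drop (y - x) = u.drop y := by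
    rw [List.drop_drop]
    congr 1
    omega
  rw [fac, ← h1, List.take_append_drop]

theorem fac_all {A : Type} (u : List A) (x : ℕ) : fac u x u.length = u.drop x := by
  have h : (u.drop x).length = u.length - x := List.length_drop
  rw [fac, ← h, List.take_length]

namespace NFA'

variable {Q A : Type}

def Blck (M : NFA' Q A) (l : ℕ) (u : List A) (i j : ℕ) : Prop :=
  M.Blocking l (posWord l i (fac u i j))

inductive GChain (M : NFA' Q A) (l : ℕ) (u : List A) : ℕ → List (ℕ × ℕ) → Prop
  | last (i : ℕ) (hi : i ≤ u.length)
      (hnb : ∀ j, i < j → j ≤ u.length → ¬ M.Blck l u i j) : GChain M l u i []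
  | step (i j : ℕ) (L : List (ℕ × ℕ)) (hij : i < j) (hj : j ≤ u.length)
      (hb : M.Blck l u i j) (hmin : ∀ j', i < j' → j' < j → ¬ M.Blck l u i j')
      (hrest : GChain M l u j L) : GChain M l u i ((i, j) :: L)

theorem gchain_exists (M : NFA' Q A) (l : ℕ) (u : List A) :
    ∀ d i, i ≤ u.length → u.length - i ≤ d → ∃ L, GChain M l u i L := by
  intro d
  induction d with
  | zero =>
    intro i hi hd
    exact ⟨[], GChain.last i hi (fun j h1 h2 => by omega)⟩
  | succ d ih =>
    intro i hi hd
    classical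
    by_cases hex : ∃ j, i < j ∧ j ≤ u.length ∧ M.Blck l u i j
    · set j₀ := Nat.find hex with hj₀
      obtain ⟨h1, h2, h3⟩ := Nat.find_spec hex
      obtain ⟨L, hL⟩ := ih j₀ h2 (by omega)
      refine ⟨(i, j₀) :: L, GChain.step i j₀ L h1 h2 h3 ?_ hL⟩
      intro j' hj1 hj2
      intro hbl
      exact Nat.find_min hex hj2 ⟨hj1, by omega, hbl⟩
    · push_neg at hex
      exact ⟨[], GChain.last i hi hex⟩

theorem gchain_scattered {M : NFA' Q A} {l : ℕ} {u : List A} :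
    ∀ {i : ℕ} {L : List (ℕ × ℕ)}, GChain M l u i L →
    Scattered (L.map fun p => posWord l p.1 (fac u p.1 p.2)) (posWord l i (u.drop i)) := by
  intro i L h
  induction h with
  | last i hi hnb => exact Scattered.nil _
  | step i j L hij hj hb hmin hrest ih =>
    have h1 : u.drop i = fac u i j ++ u.drop j := drop_eq_fac_append u (by omega)
    have h2 : i + (fac u i j).length = j := by
      rw [fac_length u (by omega : i ≤ j) hj]
      omega
    have hsplit : posWord l i (u.drop i) =
        [] ++ posWord l i (fac u i j) ++ posWord l j (u.drop j) := by
      rw [List.nil_append, h1, posWord_append, h2]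
    rw [hsplit]
    simp only [List.map_cons]
    exact Scattered.cons [] _ _ _ ih

theorem gchain_blocking {M : NFA' Q A} {l : ℕ} {u : List A} :
    ∀ {i : ℕ} {L : List (ℕ × ℕ)}, GChain M l u i L →
    ∀ f ∈ L.map fun p => posWord l p.1 (fac u p.1 p.2), M.Blocking l f := by
  intro i L h
  induction h with
  | last i hi hnb => simp
  | step i j L hij hj hb hmin hrest ih =>
    intro f hf
    simp only [List.map_cons, List.mem_cons] at hf
    rcases hf with rfl | hf
    · exact hb
    · exact ih f hf

end NFA'
end Aux7
section Aux8

theorem fac_take {A : Type} (u : List A) {i y k : ℕ} (h : k ≤ y - i) :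
    (fac u i y).take k = fac u i (i + k) := by
  rw [fac, fac, List.take_take, min_eq_left h]
  congr 1
  omega

theorem fac_drop {A : Type} (u : List A) (i y k : ℕ) :
    (fac u i y).drop k = fac u (i + k) y := by
  rw [fac, fac, List.drop_take, List.drop_drop]
  congr 1
  omega

def bigB (Q : Type) [Fintype Q] : ℕ := 2 * (Fintype.card Q * Fintype.card Q)

namespace NFA'

variable {Q A : Type} [Fintype Q] {M : NFA' Q A} {l : ℕ}

theorem conn (hsc : M.StronglyConnected) (hl : M.IsPeriod l) {c d : Q} {α γ : List A} {x y : ℕ}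
    (hα : M.Run M.init α c) (hx : α.length = x)
    (hγ : M.Run M.init γ d) (hy : ((γ.length : ℕ) : ZMod l) = ((y : ℕ) : ZMod l))
    {Lc : ℕ} (hxy : x + Lc = y) (hLc : bigB Q ≤ Lc) :
    ∃ ρ, M.Run c ρ d ∧ ρ.length = Lc := by
  obtain ⟨ρ₀, hρ₀⟩ := hsc c d
  refine pump hsc hl hρ₀ ?_ hLc
  have h1 : (α ++ ρ₀).length ≡ γ.length [MOD l] := run_modEq hsc hl (hα.append hρ₀) hγ
  have h2 : γ.length ≡ y [MOD l] := (ZMod.natCast_eq_natCast_iff _ _ _).mp hy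
  have h3 : x + ρ₀.length ≡ x + Lc [MOD l] := by
    have h4 := h1.trans h2
    rw [List.length_append, hx] at h4
    rw [hxy]
    exact h4
  exact Nat.ModEq.add_left_cancel' x h3

theorem pwit {u v₀ : List A} {fstar : Q}
    (hv₀ : M.Run M.init v₀ fstar) (hv₀len : v₀.length = u.length)
    {i y : ℕ} (hiy : i ≤ y) (hy : y ≤ u.length)
    (hnb : i < y → ¬ M.Blocking l (posWord l i (fac u i y))) :
    ∃ (s t : Q) (αs : List A), M.Run M.init αs s ∧ ((αs.length : ZMod l) = (i : ZMod l)) ∧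
      M.Run s (fac u i y) t := by
  rcases Nat.lt_or_ge i y with hlt | hge
  · have hne : fac u i y ≠ [] := by
      intro h
      have h2 := congrArg List.length h
      rw [fac_length u hiy hy] at h2
      simp at h2
      omega
    exact piece_wit (hnb hlt) hne
  · have hieq : i = y := by omega
    subst hieq
    have hfac : fac u i i = [] := by simp [fac]
    obtain ⟨s, hs, -⟩ := hv₀.take i
    refine ⟨s, s, v₀.take i, hs, ?_, by rw [hfac]; exact Run.nil s⟩
    rw [List.length_take]
    congr 1
    omega

theorem delta_tail (hsc : M.StronglyConnected) (hl : M.IsPeriod l)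
    {u v₀ : List A} {fstar : Q}
    (hv₀ : M.Run M.init v₀ fstar) (hv₀len : v₀.length = u.length)
    {x : ℕ} {c : Q} {α : List A} (hα : M.Run M.init α c) (hαl : α.length = x)
    (h1 : x + bigB Q ≤ u.length) :
    ∃ w, M.Run c w fstar ∧ w.length = u.length - x ∧
      dC (u.drop x) w ≤ u.length - x := by
  obtain ⟨ρ, hρ, hρl⟩ := conn hsc hl hα hαl hv₀ (by rw [hv₀len])
    (show x + (u.length - x) = u.length by omega) (by omega)
  refine ⟨ρ, hρ, hρl, ?_⟩
  have := dC_le_length (u.drop x) ρ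
  rw [List.length_drop] at this
  exact this

theorem dock_final (hsc : M.StronglyConnected) (hl : M.IsPeriod l)
    {u v₀ : List A} {fstar : Q}
    (hv₀ : M.Run M.init v₀ fstar) (hv₀len : v₀.length = u.length)
    {i y x : ℕ} {c : Q} {α : List A}
    (hα : M.Run M.init α c) (hαl : α.length = x)
    (hwit : ∃ (s t : Q) (αs : List A), M.Run M.init αs s ∧
      ((αs.length : ZMod l) = (i : ZMod l)) ∧ M.Run s (fac u i y) t)
    (hxi : i ≤ x + bigB Q) (hyn : y ≤ u.length) (hny : u.length ≤ y + bigB Q)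
    (hx2B : x + 2 * bigB Q ≤ u.length) :
    ∃ w, M.Run c w fstar ∧ w.length = u.length - x ∧
      dC (u.drop x) w ≤ 2 * bigB Q := by
  set B := bigB Q with hB
  set n := u.length with hn
  obtain ⟨s, t, αs, hαs, hres, hrun⟩ := hwit
  -- first dock at x + B
  have ho₁ : (x + B) - i ≤ y - i := by omega
  obtain ⟨s₁, h1a, h1b⟩ := hrun.take ((x + B) - i)
  rw [fac_take u ho₁, (show i + ((x + B) - i) = x + B by omega)] at h1a
  rw [fac_drop u, (show i + ((x + B) - i) = x + B by omega)] at h1b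
  -- kept segment up to n - B
  obtain ⟨s₂, h2a, h2b⟩ := h1b.take ((n - B) - (x + B))
  rw [fac_take u (by omega), (show (x + B) + ((n - B) - (x + B)) = n - B by omega)] at h2a
  -- first connector
  have hγ₁res : (((αs ++ fac u i (x + B)).length : ℕ) : ZMod l) = ((x + B : ℕ) : ZMod l) := by
    rw [List.length_append, fac_length u (by omega) (by omega)]
    push_cast [Nat.cast_sub (show i ≤ x + B by omega)]
    rw [hres]
    ring
  obtain ⟨ρ₁, hρ₁, hρ₁l⟩ := conn hsc hl hα hαl (hαs.append h1a) hγ₁res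
    (show x + B = x + B from rfl) le_rfl
  -- second connector
  have hα₂l : (α ++ ρ₁ ++ fac u (x + B) (n - B)).length = n - B := by
    rw [List.length_append, List.length_append, hαl, hρ₁l,
      fac_length u (by omega) (by omega)]
    omega
  obtain ⟨ρ₂, hρ₂, hρ₂l⟩ := conn hsc hl ((hα.append hρ₁).append h2a) hα₂l hv₀
    (by rw [hv₀len]) (show (n - B) + B = n by omega) le_rfl
  refine ⟨ρ₁ ++ (fac u (x + B) (n - B) ++ ρ₂), hρ₁.append (h2a.append hρ₂), ?_, ?_⟩
  · rw [List.length_append, List.length_append, hρ₁l, hρ₂l,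
      fac_length u (by omega) (by omega)]
    omega
  · have hdecomp : u.drop x = fac u x (x + B) ++ (fac u (x + B) (n - B) ++ u.drop (n - B)) := by
      rw [← drop_eq_fac_append u (by omega : x + B ≤ n - B),
        ← drop_eq_fac_append u (by omega : x ≤ x + B)]
    rw [hdecomp, dC_append _ _ _ _ (by rw [fac_length u (by omega) (by omega), hρ₁l]; omega),
      dC_append _ _ _ _ rfl, dC_self]
    have hlast : dC (u.drop (n - B)) ρ₂ ≤ B := by
      have h5 := dC_le_length (u.drop (n - B)) ρ₂
      rw [List.length_drop] at h5
      omega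
    have hfirst : dC (fac u x (x + B)) ρ₁ ≤ B := by
      have h6 := dC_le_length (fac u x (x + B)) ρ₁
      rw [fac_length u (by omega) (by omega)] at h6
      omega
    omega

theorem asm (hsc : M.StronglyConnected) (hl : M.IsPeriod l)
    {u v₀ : List A} {fstar : Q}
    (hv₀ : M.Run M.init v₀ fstar) (hv₀len : v₀.length = u.length)
    (hB1 : 1 ≤ bigB Q) :
    ∀ {i : ℕ} {L : List (ℕ × ℕ)}, M.GChain l u i L →
    ∀ (x : ℕ) (c : Q) (α : List A), M.Run M.init α c → α.length = x →
      x ≤ i → i ≤ x + bigB Q → x + bigB Q ≤ u.length →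
      ∃ w, M.Run c w fstar ∧ w.length = u.length - x ∧
        dC (u.drop x) w ≤ (L.length + 2) * bigB Q := by
  intro i L hch
  induction hch with
  | last i hi hnb =>
    intro x c α hα hαl hxi hix hxB
    rcases Nat.lt_or_ge u.length (x + 2 * bigB Q) with hδ | h2B
    · obtain ⟨w, hw, hwl, hwd⟩ := delta_tail hsc hl hv₀ hv₀len hα hαl hxB
      refine ⟨w, hw, hwl, ?_⟩
      have : u.length - x ≤ 2 * bigB Q := by omega
      calc dC (u.drop x) w ≤ u.length - x := hwd
        _ ≤ (List.length ([] : List (ℕ × ℕ)) + 2) * bigB Q := by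
            have h8 : (List.length ([] : List (ℕ × ℕ)) + 2) * bigB Q = 2 * bigB Q := by simp
            omega
    · have hwit := pwit hv₀ hv₀len (show i ≤ u.length from hi) le_rfl
        (fun hlt => hnb u.length hlt le_rfl)
      obtain ⟨w, hw, hwl, hwd⟩ := dock_final hsc hl hv₀ hv₀len hα hαl hwit hix le_rfl
        (by omega) h2B
      exact ⟨w, hw, hwl, by simpa using hwd⟩
  | step i j L hij hj hb hmin hrest ih =>
    intro x c α hα hαl hxi hix hxB
    rcases Nat.lt_or_ge u.length (x + 2 * bigB Q) with hδ | h2B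
    · obtain ⟨w, hw, hwl, hwd⟩ := delta_tail hsc hl hv₀ hv₀len hα hαl hxB
      refine ⟨w, hw, hwl, ?_⟩
      refine le_trans hwd ?_
      simp only [List.length_cons]
      have h7 : 2 * bigB Q ≤ (L.length + 1 + 2) * bigB Q := Nat.mul_le_mul_right _ (by omega)
      omega
    · rcases Nat.lt_or_ge j (x + bigB Q + 1) with hskip | hdock1
      · -- skip this piece
        obtain ⟨w, hw, hwl, hwd⟩ := ih x c α hα hαl (by omega) (by omega) hxB
        exact ⟨w, hw, hwl, le_trans hwd (Nat.mul_le_mul_right _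
          (by simp only [List.length_cons]; omega))⟩
      · rcases Nat.lt_or_ge (u.length + 1) (j + bigB Q) with hterm | hnorm
        · -- terminal dock into this piece
          have hilt : i < j - 1 := by omega
          have hwit := pwit hv₀ hv₀len (show i ≤ j - 1 by omega) (by omega)
            (fun _ => hmin (j - 1) hilt (by omega))
          obtain ⟨w, hw, hwl, hwd⟩ := dock_final hsc hl hv₀ hv₀len hα hαl hwit hix
            (by omega) (by omega) h2B
          refine ⟨w, hw, hwl, ?_⟩
          calc dC (u.drop x) w ≤ 2 * bigB Q := hwd
            _ ≤ (((i, j) :: L).length + 2) * bigB Q :=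
              Nat.mul_le_mul_right _ (by simp only [List.length_cons]; omega)
        · -- normal dock
          have hwit := pwit hv₀ hv₀len (show i ≤ j - 1 by omega) (by omega)
            (fun hlt => hmin (j - 1) hlt (by omega))
          obtain ⟨s, t, αs, hαs, hres, hrun⟩ := hwit
          have ho₁ : (x + bigB Q) - i ≤ (j - 1) - i := by omega
          obtain ⟨s₁, h1a, h1b⟩ := hrun.take ((x + bigB Q) - i)
          rw [fac_take u ho₁, (show i + ((x + bigB Q) - i) = x + bigB Q by omega)] at h1a
          rw [fac_drop u, (show i + ((x + bigB Q) - i) = x + bigB Q by omega)] at h1b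
          have hγ₁res : (((αs ++ fac u i (x + bigB Q)).length : ℕ) : ZMod l) =
              ((x + bigB Q : ℕ) : ZMod l) := by
            rw [List.length_append, fac_length u (by omega) (by omega)]
            push_cast [Nat.cast_sub (show i ≤ x + bigB Q by omega)]
            rw [hres]
            ring
          obtain ⟨ρ₁, hρ₁, hρ₁l⟩ := conn hsc hl hα hαl (hαs.append h1a) hγ₁res
            (show x + bigB Q = x + bigB Q from rfl) le_rfl
          have hα'l : (α ++ ρ₁ ++ fac u (x + bigB Q) (j - 1)).length = j - 1 := by
            rw [List.length_append, List.length_append, hαl, hρ₁l,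
              fac_length u (by omega) (by omega)]
            omega
          obtain ⟨w', hw', hw'l, hw'd⟩ := ih (j - 1) t (α ++ ρ₁ ++ fac u (x + bigB Q) (j - 1))
            ((hα.append hρ₁).append h1b) hα'l (by omega) (by omega) (by omega)
          refine ⟨ρ₁ ++ (fac u (x + bigB Q) (j - 1) ++ w'), hρ₁.append (h1b.append hw'), ?_, ?_⟩
          · rw [List.length_append, List.length_append, hρ₁l, hw'l,
              fac_length u (by omega) (by omega)]
            omega
          · have hdecomp : u.drop x =
                fac u x (x + bigB Q) ++ (fac u (x + bigB Q) (j - 1) ++ u.drop (j - 1)) := by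
              rw [← drop_eq_fac_append u (by omega : x + bigB Q ≤ j - 1),
                ← drop_eq_fac_append u (by omega : x ≤ x + bigB Q)]
            rw [hdecomp,
              dC_append _ _ _ _ (by rw [fac_length u (by omega) (by omega), hρ₁l]; omega),
              dC_append _ _ _ _ rfl, dC_self]
            have hfirst : dC (fac u x (x + bigB Q)) ρ₁ ≤ bigB Q := by
              have h6 := dC_le_length (fac u x (x + bigB Q)) ρ₁
              rw [fac_length u (by omega) (by omega)] at h6
              omega
            have hgoal : (((i, j) :: L).length + 2) * bigB Q =
                (L.length + 2) * bigB Q + bigB Q := by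
              simp only [List.length_cons]
              ring
            omega

end NFA'
end Aux8
-- STATEMENT 4
theorem stmt4 {Q A : Type} [Fintype Q] [Fintype A] (M : NFA' Q A)
    (hsc : M.StronglyConnected) (l : ℕ) (hl : M.IsPeriod l)
    (ε : ℝ) (hε : 0 < ε) (u : List A)
    (hn : 6 * (Fintype.card Q : ℝ) ^ 2 / ε ≤ (u.length : ℝ))
    (hword : ∃ v ∈ M.lang, v.length = u.length)
    (hfar : ENNReal.ofReal (ε * u.length) ≤ hammingSet (posWord l 0 u) (M.posLang l)) :
    ∃ fs : List (List (ZMod l × A)), (∀ f ∈ fs, M.Blocking l f) ∧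
      Scattered fs (posWord l 0 u) ∧
      ε * (u.length : ℝ) / (6 * (Fintype.card Q : ℝ) ^ 2) ≤ (fs.length : ℝ) := by
  classical
  obtain ⟨v₀, hv₀lang, hv₀len⟩ := hword
  obtain ⟨fstar, hfst, hv₀run⟩ := hv₀lang
  have hm1 : 1 ≤ Fintype.card Q := Fintype.card_pos_iff.mpr ⟨M.init⟩
  have hB1 : 1 ≤ bigB Q := by
    rw [bigB]
    nlinarith
  have hmR : (1 : ℝ) ≤ (Fintype.card Q : ℝ) := by exact_mod_cast hm1
  -- ε * n ≥ 6 m²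
  have hεn : 6 * (Fintype.card Q : ℝ) ^ 2 ≤ ε * u.length := by
    have := (div_le_iff₀ hε).mp hn
    linarith [this]
  -- ε * n ≤ n
  have hε1 : ε * (u.length : ℝ) ≤ (u.length : ℝ) := by
    have hple : (posWord l 0 u).length = (posWord l 0 v₀).length := by
      rw [posWord_length, posWord_length, hv₀len]
    have h1 : hamming (posWord l 0 u) (posWord l 0 v₀) ≤ ((u.length : ℕ) : ℝ≥0∞) := by
      have h := hamming_le_len (posWord l 0 u) (posWord l 0 v₀) hple
      rwa [posWord_length] at h
    have h2 := le_trans (le_trans hfar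
      (hammingSet_le _ (NFA'.mem_posLang ⟨fstar, hfst, hv₀run⟩))) h1
    rw [← ENNReal.ofReal_natCast u.length] at h2
    exact (ENNReal.ofReal_le_ofReal_iff (by positivity)).mp h2
  have hn6R : 6 * (Fintype.card Q : ℝ) ^ 2 ≤ (u.length : ℝ) := le_trans hεn hε1
  have hn6 : 6 * Fintype.card Q ^ 2 ≤ u.length := by exact_mod_cast hn6R
  have hsq : Fintype.card Q ^ 2 = Fintype.card Q * Fintype.card Q := by ring
  obtain ⟨L, hL⟩ := NFA'.gchain_exists M l u u.length 0 (by omega) (by omega)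
  by_cases hbig : ε * (u.length : ℝ) / (6 * (Fintype.card Q : ℝ) ^ 2) ≤ (L.length : ℝ)
  · refine ⟨L.map fun p => posWord l p.1 (fac u p.1 p.2), NFA'.gchain_blocking hL, ?_, ?_⟩
    · have hsc' := NFA'.gchain_scattered hL
      simpa using hsc'
    · simpa using hbig
  · push_neg at hbig
    exfalso
    obtain ⟨w, hwrun, hwlen, hwd⟩ := NFA'.asm hsc hl hv₀run hv₀len hB1 hL 0 M.init []
      (NFA'.Run.nil _) rfl (by omega) (by omega) (by rw [bigB]; omega)
    have hwlang : w ∈ M.lang := ⟨fstar, hfst, hwrun⟩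
    have hwlen' : w.length = u.length := by simpa using hwlen
    have hwd' : dC u w ≤ (L.length + 2) * bigB Q := by simpa using hwd
    have hdist : hammingSet (posWord l 0 u) (M.posLang l) ≤
        (((L.length + 2) * bigB Q : ℕ) : ℝ≥0∞) :=
      le_trans (hammingSet_le _ (NFA'.mem_posLang hwlang))
        (le_trans (hamming_posWord_le l u w hwlen'.symm) (by exact_mod_cast hwd'))
    have hcontr := le_trans hfar hdist
    rw [← ENNReal.ofReal_natCast ((L.length + 2) * bigB Q)] at hcontr
    have hreal : ε * (u.length : ℝ) ≤ (((L.length + 2) * bigB Q : ℕ) : ℝ) :=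
      (ENNReal.ofReal_le_ofReal_iff (by positivity)).mp hcontr
    have hrealB : ε * (u.length : ℝ) ≤
        ((L.length : ℝ) + 2) * (2 * (Fintype.card Q : ℝ) ^ 2) := by
      have hcast : (((L.length + 2) * bigB Q : ℕ) : ℝ) =
          ((L.length : ℝ) + 2) * (2 * (Fintype.card Q : ℝ) ^ 2) := by
        rw [bigB]
        push_cast
        ring
      rwa [hcast] at hreal
    have hrL : (L.length : ℝ) * (6 * (Fintype.card Q : ℝ) ^ 2) < ε * u.length := by
      have hpos : (0 : ℝ) < 6 * (Fintype.card Q : ℝ) ^ 2 := by positivity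
      exact (lt_div_iff₀ hpos).mp hbig
    nlinarith [hεn, hrealB, hrL]
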